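/- For any distribution μ ∈ Δ(X×A) and any cost c with ‖c‖_∞ ≤ 1, the gap between the linear objective at μ and the true expected cost of the induced policy satisfies ⟨μ, c⟩ - ρ_c(π_μ) ≤ ‖T_γ μ - ν₀‖₁. -/

import Mathlib

open Finset

variable {X A : Type*} [Fintype X] [Fintype A] [DecidableEq X] [DecidableEq A]
  [Nonempty X] [Nonempty A]

/-- A finite discounted Markov decision process. -/
structure FinMDP (X A : Type*) [Fintype X] [Fintype A] where
  P : X → A → X → ℝ
  P_nonneg : ∀ x a x', 0 ≤ P x a x'
  P_sum : ∀ x a, ∑ x', P x a x' = 1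
  ν : X → ℝ
  ν_nonneg : ∀ x, 0 ≤ ν x
  ν_sum : ∑ x, ν x = 1
  γ : ℝ
  γ_pos : 0 < γ
  γ_lt_one : γ < 1

/-- A stationary Markov policy. -/
def FinMDP.IsPolicy (π : X → A → ℝ) : Prop :=
  (∀ x a, 0 ≤ π x a) ∧ ∀ x, ∑ a, π x a = 1

namespace FinMDP

variable (M : FinMDP X A)

/-- The state-action distribution at time `t` of policy `π` started from `ν'`. -/
noncomputable def saDist (ν' : X → ℝ) (π : X → A → ℝ) : ℕ → X × A → ℝ
  | 0 => fun p => ν' p.1 * π p.1 p.2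
  | t + 1 => fun p => (∑ q : X × A, saDist ν' π t q * M.P q.1 q.2 p.1) * π p.1 p.2

/-- The normalized discounted occupancy measure of `π` started from `ν'`. -/
noncomputable def occFrom (ν' : X → ℝ) (π : X → A → ℝ) (p : X × A) : ℝ :=
  (1 - M.γ) * ∑' t : ℕ, M.γ ^ t * M.saDist ν' π t p

/-- The normalized discounted occupancy measure of `π` (from the initial distribution). -/
noncomputable def occ (π : X → A → ℝ) : X × A → ℝ :=
  M.occFrom M.ν π

/-- The (normalized) value function of policy `π` for cost `c`. -/
noncomputable def value (c : X × A → ℝ) (π : X → A → ℝ) (x : X) : ℝ :=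
  ∑ p : X × A, M.occFrom (fun y => if y = x then 1 else 0) π p * c p

/-- The total expected (normalized) discounted cost `ρ_c(π) = ⟨μ_π, c⟩`. -/
noncomputable def cost (c : X × A → ℝ) (π : X → A → ℝ) : ℝ :=
  ∑ p : X × A, M.occ π p * c p

/-- The Bellman flow operator `T_γ μ = (1/(1-γ)) (B - γ P)ᵀ μ`. -/
noncomputable def Tflow (μ : X × A → ℝ) (x' : X) : ℝ :=
  (1 / (1 - M.γ)) * ((∑ a, μ (x', a)) - M.γ * ∑ p : X × A, μ p * M.P p.1 p.2 x')

/-- The adjoint operator `T*_γ u = (1/(1-γ)) (B - γ P) u`. -/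
noncomputable def Tadj (u : X → ℝ) (p : X × A) : ℝ :=
  (1 / (1 - M.γ)) * (u p.1 - M.γ * ∑ x', M.P p.1 p.2 x' * u x')

/-- `π` is an optimal policy for the forward RL problem with cost `c`. -/
def IsOptimal (c : X × A → ℝ) (π : X → A → ℝ) : Prop :=
  IsPolicy π ∧ ∀ π', IsPolicy π' → M.cost c π ≤ M.cost c π'

/-- The optimal value function `V*_c(x) = min_π V_c^π(x)`. -/
noncomputable def Vstar (c : X × A → ℝ) (x : X) : ℝ :=
  sInf {v | ∃ π, IsPolicy π ∧ v = M.value c π x}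

end FinMDP

/-- The policy induced by a state-action distribution:
`π_μ(a|x) = μ(x,a) / ∑_{a'} μ(x,a')` (uniform on zero-mass states). -/
noncomputable def inducedPolicy (μ : X × A → ℝ) (x : X) (a : A) : ℝ :=
  if (∑ a' : A, μ (x, a')) = 0 then (1 : ℝ) / (Fintype.card A)
  else μ (x, a) / ∑ a' : A, μ (x, a')

/-- `μ` is a probability distribution on state-action pairs. -/
def IsDist (μ : X × A → ℝ) : Prop := (∀ p, 0 ≤ μ p) ∧ ∑ p : X × A, μ p = 1

/-- Membership in the probability simplex `Δ_{[n]}`. -/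
def simplexPt {n : ℕ} (w : Fin n → ℝ) : Prop := (∀ i, 0 ≤ w i) ∧ ∑ i, w i = 1

/-- The `ℓ¹` norm of a finitely supported vector. -/
noncomputable def l1 {ι : Type*} [Fintype ι] (f : ι → ℝ) : ℝ := ∑ i, |f i|

/-- The `ℓ∞` norm of a finitely supported vector. -/
noncomputable def linf {ι : Type*} [Fintype ι] [Nonempty ι] (f : ι → ℝ) : ℝ :=
  Finset.univ.sup' Finset.univ_nonempty fun i => |f i|

/-- The cost `c_w = ∑ᵢ wᵢ cᵢ` parameterized by weights `w`. -/
noncomputable def costW {nc : ℕ} (c : Fin nc → X × A → ℝ) (w : Fin nc → ℝ) :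
    X × A → ℝ :=
  fun p => ∑ i, w i * c i p

/-- The objective of the dual LP `(D_{π_E})`. -/
noncomputable def dualObj {nc : ℕ} (M : FinMDP X A) (c : Fin nc → X × A → ℝ)
    (πE : X → A → ℝ) (u : X → ℝ) (w : Fin nc → ℝ) : ℝ :=
  ∑ p : X × A, M.occ πE p * (M.Tadj u p - costW c w p)

/-- Feasibility for the dual LP `(D_{π_E})`. -/
def dualFeasible {nc : ℕ} (M : FinMDP X A) (c : Fin nc → X × A → ℝ)
    (u : X → ℝ) (w : Fin nc → ℝ) : Prop :=
  simplexPt w ∧ ∀ p, 0 ≤ costW c w p - M.Tadj u p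

/-- Optimality for the dual LP `(D_{π_E})`. -/
def dualOptimal {nc : ℕ} (M : FinMDP X A) (c : Fin nc → X × A → ℝ)
    (πE : X → A → ℝ) (u : X → ℝ) (w : Fin nc → ℝ) : Prop :=
  dualFeasible M c u w ∧
    ∀ u' w', dualFeasible M c u' w' → dualObj M c πE u' w' ≤ dualObj M c πE u w

/-- The `C`-distance `δ_C(π, π_E) = max_i (ρ_{c_i}(π) - ρ_{c_i}(π_E))`. -/
noncomputable def gapMax {nc : ℕ} [NeZero nc] (M : FinMDP X A)
    (c : Fin nc → X × A → ℝ) (πE π : X → A → ℝ) : ℝ :=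
  haveI : Nonempty (Fin nc) := ⟨⟨0, Nat.pos_of_ne_zero (NeZero.ne nc)⟩⟩
  Finset.univ.sup' Finset.univ_nonempty fun i => M.cost (c i) π - M.cost (c i) πE

/-- `π_A` is an apprentice policy: it minimizes `δ_C(·, π_E)` over stationary policies. -/
def IsApprentice {nc : ℕ} [NeZero nc] (M : FinMDP X A)
    (c : Fin nc → X × A → ℝ) (πE πA : X → A → ℝ) : Prop :=
  FinMDP.IsPolicy πA ∧
    ∀ π, FinMDP.IsPolicy π → gapMax M c πE πA ≤ gapMax M c πE π

/-- The parameter set `Λ = {λ : ‖λ‖₂ ≤ β/√n_u}`. -/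
def lamSet (nu : ℕ) (β : ℝ) : Set (Fin nu → ℝ) :=
  {l | Real.sqrt (∑ k, l k ^ 2) ≤ β / Real.sqrt nu}

/-- The reduced Lagrangian `L_r(θ, λ, w) = ⟨μ_θ - μ_{π_E}, c_w - T*_γ u_λ⟩`. -/
noncomputable def Lr {nm nu nc : ℕ} (M : FinMDP X A)
    (Φ : Fin nm → X × A → ℝ) (Ψ : Fin nu → X → ℝ) (c : Fin nc → X × A → ℝ)
    (πE : X → A → ℝ) (θ : Fin nm → ℝ) (lam : Fin nu → ℝ) (w : Fin nc → ℝ) : ℝ :=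
  ∑ p : X × A, ((∑ i, θ i * Φ i p) - M.occ πE p) *
    ((∑ j, w j * c j p) - M.Tadj (fun x => ∑ k, lam k * Ψ k x) p)

/-- The saddle-point residual of a point `(θ, λ, w)` for the reduced Lagrangian. -/
noncomputable def epsSad {nm nu nc : ℕ} (M : FinMDP X A)
    (Φ : Fin nm → X × A → ℝ) (Ψ : Fin nu → X → ℝ) (c : Fin nc → X × A → ℝ)
    (πE : X → A → ℝ) (β : ℝ)
    (θ : Fin nm → ℝ) (lam : Fin nu → ℝ) (w : Fin nc → ℝ) : ℝ :=
  sSup {v | ∃ lam' ∈ lamSet nu β, ∃ w', simplexPt w' ∧ v = Lr M Φ Ψ c πE θ lam' w'} -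
    sInf {v | ∃ θ', simplexPt θ' ∧ v = Lr M Φ Ψ c πE θ' lam w}

/- Both `μ` and `μ_{π_μ}` are fixed points of `flowStep ν π_μ`, that is of
`f ↦ (1 - γ) ν ⊗ π_μ + γ K f` with `K f = nextState f ⊗ π_μ`, for `ν = T_γ μ` and `ν = ν₀`
respectively. Since `K` does not increase the `ℓ¹` norm, the difference `d` of the two fixed
points satisfies `‖d‖₁ ≤ (1 - γ) ‖T_γ μ - ν₀‖₁ + γ ‖d‖₁`, hence `‖d‖₁ ≤ ‖T_γ μ - ν₀‖₁`, and
Hölder's inequality with `‖c‖_∞ ≤ 1` finishes. -/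

lemma abs_le_l1 {ι : Type*} [Fintype ι] (f : ι → ℝ) (i : ι) : |f i| ≤ l1 f :=
  Finset.single_le_sum (f := fun j => |f j|) (fun _ _ => abs_nonneg _) (Finset.mem_univ i)

lemma sum_mul_le_l1 {ι : Type*} [Fintype ι] (f : ι → ℝ) {c : ι → ℝ} (hc : ∀ i, |c i| ≤ 1) :
    ∑ i, f i * c i ≤ l1 f :=
  Finset.sum_le_sum fun i _ => calc
    f i * c i ≤ |f i| * |c i| := (le_abs_self _).trans (abs_mul _ _).le
    _ ≤ |f i| := mul_le_of_le_one_right (abs_nonneg _) (hc i)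

section

-- Fresh `X A`, so that the ambient `DecidableEq` and `Nonempty` instances are not included.
variable {X A : Type*} [Fintype A]

lemma isPolicy_inducedPolicy [Nonempty A] {μ : X × A → ℝ} (hμ : ∀ p, 0 ≤ μ p) :
    FinMDP.IsPolicy (inducedPolicy μ) := by
  refine ⟨fun x a => ?_, fun x => ?_⟩ <;> unfold inducedPolicy <;>
    split_ifs with h
  · positivity
  · exact div_nonneg (hμ _) (Finset.sum_nonneg fun a' _ => hμ _)
  · simp [Finset.card_univ]
  · rw [← Finset.sum_div, div_self h]

lemma sum_mul_inducedPolicy {μ : X × A → ℝ} (hμ : ∀ p, 0 ≤ μ p) (x : X) (a : A) :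
    (∑ a', μ (x, a')) * inducedPolicy μ x a = μ (x, a) := by
  unfold inducedPolicy
  split_ifs with h
  · rw [h, zero_mul]
    exact ((Finset.sum_eq_zero_iff_of_nonneg fun a' _ => hμ (x, a')).1 h a
      (Finset.mem_univ a)).symm
  · exact mul_div_cancel₀ _ h

variable [Fintype X]

lemma l1_mul_policy {π : X → A → ℝ} (hπ : FinMDP.IsPolicy π) (g : X → ℝ) :
    l1 (fun p : X × A => g p.1 * π p.1 p.2) = l1 g := by
  unfold l1
  rw [Fintype.sum_prod_type]
  refine Finset.sum_congr rfl fun x _ => ?_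
  simp only [abs_mul, abs_of_nonneg (hπ.1 x _), ← Finset.mul_sum, hπ.2 x, mul_one]

namespace FinMDP

variable (M : FinMDP X A)

noncomputable def nextState (f : X × A → ℝ) (x' : X) : ℝ :=
  ∑ q : X × A, f q * M.P q.1 q.2 x'

noncomputable def flowStep (ν' : X → ℝ) (π : X → A → ℝ) (f : X × A → ℝ) (p : X × A) : ℝ :=
  ((1 - M.γ) * ν' p.1 + M.γ * M.nextState f p.1) * π p.1 p.2

lemma nextState_sub (f g : X × A → ℝ) (x' : X) :
    M.nextState (fun q => f q - g q) x' = M.nextState f x' - M.nextState g x' := by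
  simp only [nextState, sub_mul, Finset.sum_sub_distrib]

lemma l1_nextState_le (f : X × A → ℝ) : l1 (M.nextState f) ≤ l1 f := calc
  ∑ x', |M.nextState f x'| ≤ ∑ x', ∑ q : X × A, |f q| * M.P q.1 q.2 x' :=
      Finset.sum_le_sum fun x' _ => (Finset.abs_sum_le_sum_abs _ _).trans_eq <|
        Finset.sum_congr rfl fun q _ => by rw [abs_mul, abs_of_nonneg (M.P_nonneg _ _ _)]
  _ = ∑ q : X × A, |f q| := by
      rw [Finset.sum_comm]
      simp only [← Finset.mul_sum, M.P_sum, mul_one]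

lemma saDist_succ (ν' : X → ℝ) (π : X → A → ℝ) (t : ℕ) :
    M.saDist ν' π (t + 1) = fun p => M.nextState (M.saDist ν' π t) p.1 * π p.1 p.2 :=
  rfl

lemma l1_saDist_le {π : X → A → ℝ} (hπ : IsPolicy π) (ν' : X → ℝ) (t : ℕ) :
    l1 (M.saDist ν' π t) ≤ l1 ν' := by
  induction t with
  | zero => exact (l1_mul_policy hπ ν').le
  | succ t ih => calc
      l1 (M.saDist ν' π (t + 1)) = l1 (M.nextState (M.saDist ν' π t)) := by
        rw [saDist_succ]; exact l1_mul_policy hπ _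
      _ ≤ l1 ν' := (M.l1_nextState_le _).trans ih

lemma summable_saDist {π : X → A → ℝ} (hπ : IsPolicy π) (ν' : X → ℝ) (p : X × A) :
    Summable fun t => M.γ ^ t * M.saDist ν' π t p := by
  have hγ : 0 ≤ M.γ := M.γ_pos.le
  refine Summable.of_norm_bounded
    ((summable_geometric_of_lt_one hγ M.γ_lt_one).mul_right (l1 ν')) fun t => ?_
  rw [Real.norm_eq_abs, abs_mul, abs_of_nonneg (pow_nonneg hγ t)]
  exact mul_le_mul_of_nonneg_left ((abs_le_l1 _ p).trans (M.l1_saDist_le hπ ν' t))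
    (pow_nonneg hγ t)

lemma isFixedPt_flowStep_occFrom {π : X → A → ℝ} (hπ : IsPolicy π) (ν' : X → ℝ) :
    Function.IsFixedPt (M.flowStep ν' π) (M.occFrom ν' π) := by
  set S : X × A → ℝ := fun p => ∑' t, M.γ ^ t * M.saDist ν' π t p
  have hnext : ∀ x', M.nextState S x' = ∑' t, M.γ ^ t * M.nextState (M.saDist ν' π t) x' :=
    fun x' => by
      simp only [nextState, S, Finset.mul_sum, ← tsum_mul_right]
      rw [← Summable.tsum_finsetSum fun q _ => (M.summable_saDist hπ ν' q).mul_right _]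
      simp only [mul_assoc]
  have hS : ∀ p, S p = (ν' p.1 + M.γ * M.nextState S p.1) * π p.1 p.2 := fun p => by
    show ∑' t, M.γ ^ t * M.saDist ν' π t p = _
    rw [(M.summable_saDist hπ ν' p).tsum_eq_zero_add, hnext, ← tsum_mul_left, add_mul,
      ← tsum_mul_right]
    refine congrArg₂ (· + ·) (by simp [saDist]) (tsum_congr fun t => ?_)
    simp only [saDist_succ]
    ring
  funext p
  have hocc : M.occFrom ν' π = fun q => (1 - M.γ) * S q := rfl
  simp only [flowStep, hocc, nextState, mul_assoc, ← Finset.mul_sum]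
  rw [hS p, nextState]
  ring

lemma l1_sub_le_of_isFixedPt {π : X → A → ℝ} (hπ : IsPolicy π) {ν₁ ν₂ : X → ℝ}
    {f g : X × A → ℝ} (hf : Function.IsFixedPt (M.flowStep ν₁ π) f)
    (hg : Function.IsFixedPt (M.flowStep ν₂ π) g) :
    l1 (fun p => f p - g p) ≤ l1 (fun x => ν₁ x - ν₂ x) := by
  have hγ : 0 < 1 - M.γ := sub_pos.2 M.γ_lt_one
  set d : X × A → ℝ := fun p => f p - g p
  have hd : d = fun p =>
      ((1 - M.γ) * (ν₁ p.1 - ν₂ p.1) + M.γ * M.nextState d p.1) * π p.1 p.2 := by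
    funext p
    conv_lhs => simp only [d]; rw [← hf, ← hg]
    simp only [flowStep, d, nextState_sub]
    ring
  have hcontract : l1 d ≤ (1 - M.γ) * l1 (fun x => ν₁ x - ν₂ x) + M.γ * l1 d := calc
    l1 d = ∑ x, |(1 - M.γ) * (ν₁ x - ν₂ x) + M.γ * M.nextState d x| :=
        (congrArg l1 hd).trans <|
          l1_mul_policy hπ fun x => (1 - M.γ) * (ν₁ x - ν₂ x) + M.γ * M.nextState d x
    _ ≤ ∑ x, ((1 - M.γ) * |ν₁ x - ν₂ x| + M.γ * |M.nextState d x|) :=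
        Finset.sum_le_sum fun x _ => (abs_add_le _ _).trans_eq <| by
          rw [abs_mul, abs_mul, abs_of_pos hγ, abs_of_pos M.γ_pos]
    _ ≤ (1 - M.γ) * l1 (fun x => ν₁ x - ν₂ x) + M.γ * l1 d := by
        rw [Finset.sum_add_distrib, ← Finset.mul_sum, ← Finset.mul_sum]
        exact add_le_add_right (mul_le_mul_of_nonneg_left (M.l1_nextState_le d) M.γ_pos.le) _
  exact le_of_mul_le_mul_left (by linarith) hγ

lemma isFixedPt_flowStep_Tflow {μ : X × A → ℝ} (hμ : ∀ p, 0 ≤ μ p) :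
    Function.IsFixedPt (M.flowStep (M.Tflow μ) (inducedPolicy μ)) μ := by
  funext ⟨x, a⟩
  have hγ : 1 - M.γ ≠ 0 := (sub_pos.2 M.γ_lt_one).ne'
  have hT : (1 - M.γ) * M.Tflow μ x + M.γ * M.nextState μ x = ∑ a', μ (x, a') := by
    simp only [Tflow, nextState]
    field_simp
    ring
  simp only [flowStep, hT]
  exact sum_mul_inducedPolicy hμ x a

end FinMDP

end

/-- For any distribution `μ ∈ Δ(X×A)` and cost `c` with `‖c‖_∞ ≤ 1`,
the gap between the linear objective at `μ` and the true expected cost of the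
induced policy satisfies `⟨μ, c⟩ - ρ_c(π_μ) ≤ ‖T_γ μ - ν₀‖₁`. -/
theorem objective_gap_bound (M : FinMDP X A)
    (μ : X × A → ℝ) (hμ : IsDist μ)
    (c : X × A → ℝ) (hc : ∀ p, |c p| ≤ 1) :
    (∑ p : X × A, μ p * c p) - M.cost c (inducedPolicy μ)
      ≤ l1 (fun x => M.Tflow μ x - M.ν x) := by
  have hπ := isPolicy_inducedPolicy hμ.1
  calc (∑ p : X × A, μ p * c p) - M.cost c (inducedPolicy μ)
      = ∑ p : X × A, (μ p - M.occ (inducedPolicy μ) p) * c p := by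
        simp only [FinMDP.cost, sub_mul, Finset.sum_sub_distrib]
    _ ≤ l1 (fun p => μ p - M.occ (inducedPolicy μ) p) := sum_mul_le_l1 _ hc
    _ ≤ l1 (fun x => M.Tflow μ x - M.ν x) :=
        M.l1_sub_le_of_isFixedPt hπ (M.isFixedPt_flowStep_Tflow hμ.1)
          (M.isFixedPt_flowStep_occFrom hπ M.ν)
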